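/- For all u,v,w ∈ S_∞, the skew divided difference operator applied to a single Schubert polynomial satisfies ∂_{w/v} 𝔖_u(x) = c̄_{u,v}^w(x,0), i.e. it equals the double Schubert structure constant c̄_{u,v}^w(t,y) with each t_i replaced by x_i and each y_i replaced by 0. -/

import Mathlib

/-!
Evaluate `∂_w (𝔖_u(x,0) · 𝔖_v(x,t))` at `x = t` in two ways. Expanding the product as
`Σ c̄_{u,v}^{w'}(t,0) 𝔖_{w'}(x,t)` and using `(∂_w 𝔖_{w'})(t,t) = δ_{w,w'}` gives
`c̄_{u,v}^w(t,0)`; the Leibniz rule and `(∂_{v'} 𝔖_v)(t,t) = δ_{v,v'}` give `(∂_{w/v} 𝔖_u)(t)`.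

Both Kronecker deltas come from the localization `𝔖_z(t,t) = δ_{z,1}`. To prove it, build the
double Schubert polynomials of `S_N` with generic coefficients `τ` by divided differences from
`∏_{i+j<N-1} (x_i - τ_j)`. For injective `τ` they vanish at `x = τ ∘ σ` whenever `ℓ(σ) < ℓ(w)`,
by descending induction on `ℓ(w)` from `w₀`, dividing by `τ_{σ i} - τ_{σ(i+1)}`. Taking `τ` to be a second
copy of the variables and specializing it to `t` recovers `𝔖_z(x,t)`, since both families obey
the same recursion from the same top polynomial.
-/

open MvPolynomial

noncomputable section

namespace BPDPuzzle

/-- `x ⊖ y = (x - y)/(1 + β·y)`. -/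
def ominus {K : Type*} [Field K] (β a b : K) : K := (a - b) / (1 + β * b)

/-- A permutation of `ℕ` lying in `S_∞`, i.e. fixing all sufficiently large integers. -/
def FinPerm (w : Equiv.Perm ℕ) : Prop := ∃ N : ℕ, ∀ j, N ≤ j → w j = j

/-- A permutation of `ℕ` lying in `S_n` (0-based positions `0, …, n-1`). -/
def InSn (n : ℕ) (w : Equiv.Perm ℕ) : Prop := ∀ j, n ≤ j → w j = j

/-- Coxeter length: the number of inversions. -/
def len (w : Equiv.Perm ℕ) : ℕ := Set.ncard {p : ℕ × ℕ | p.1 < p.2 ∧ w p.2 < w p.1}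

/-- The simple transposition `s_i`, exchanging the (0-based) positions `i` and `i+1`. -/
def sTr (i : ℕ) : Equiv.Perm ℕ := Equiv.swap i (i + 1)

/-- `u` and `v` have separated descents at position `k`, i.e.
`maxdes(u) ≤ k ≤ mindes(v)` (in 0-based conventions: `u` has no descent at any
0-based position `≥ k` and `v` has no descent at any 0-based position `< k-1`). -/
def SepDesc (k : ℕ) (u v : Equiv.Perm ℕ) : Prop :=
  (∀ i, k ≤ i → u i ≤ u (i + 1)) ∧ (∀ i, i + 1 < k → v i ≤ v (i + 1))

/-- The longest element `n ⋯ 2 1` of `S_n`, extended by the identity. -/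
def revPerm (n : ℕ) : Equiv.Perm ℕ where
  toFun j := if j < n then n - 1 - j else j
  invFun j := if j < n then n - 1 - j else j
  left_inv j := by dsimp only; split_ifs <;> omega
  right_inv j := by dsimp only; split_ifs <;> omega

/-- Exchange the values of a valuation at the indices `i` and `i+1`. -/
def swapVal {K : Type*} (t : ℕ → K) (i : ℕ) : ℕ → K :=
  fun j => if j = i then t (i + 1) else if j = i + 1 then t i else t j

/-- The defining properties of the family of double Grothendieck polynomials
`𝔊_w(x, t)`, viewed as a family of polynomials in the `x`-variables depending on
a valuation `t` of the second set of variables:  the initial condition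
`𝔊_{n⋯21}(x,t) = ∏_{i+j≤n} (x_i ⊖ t_j)` together with the Demazure recursion
`π_i 𝔊_w = 𝔊_{w s_i}` whenever `w(i) > w(i+1)` (the latter written with the
denominator `x_i - x_{i+1}` cleared). -/
def GrothFamily {K : Type*} [Field K] (β : K)
    (G : (ℕ → K) → Equiv.Perm ℕ → MvPolynomial ℕ K) : Prop :=
  ∀ t : ℕ → K, (∀ j, 1 + β * t j ≠ 0) →
    (∀ n : ℕ, G t (revPerm n) =
      ∏ i ∈ Finset.range n, ∏ j ∈ Finset.range (n - 1 - i),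
        C ((1 + β * t j)⁻¹) * (X i - C (t j))) ∧
    (∀ (w : Equiv.Perm ℕ) (i : ℕ), w (i + 1) < w i →
      (X i - X (i + 1)) * G t (w * sTr i) =
        (1 + C β * X (i + 1)) * G t w
          - (1 + C β * X i) * rename ⇑(Equiv.swap i (i + 1)) (G t w))

/-- The defining property of the structure constants `c_{u,v}^w(t,y)`:
`𝔊_u(x,y) · 𝔊_v(x,t) = Σ_w c_{u,v}^w(t,y) · 𝔊_w(x,t)`, the (finitely supported)
sum ranging over the permutations `w ∈ S_∞`. -/
def StructConsts {K : Type*} [Field K] (β : K)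
    (G : (ℕ → K) → Equiv.Perm ℕ → MvPolynomial ℕ K)
    (c : (ℕ → K) → (ℕ → K) → Equiv.Perm ℕ → Equiv.Perm ℕ → Equiv.Perm ℕ → K) : Prop :=
  ∀ t y : ℕ → K, (∀ j, 1 + β * t j ≠ 0) → (∀ j, 1 + β * y j ≠ 0) →
    ∀ u v : Equiv.Perm ℕ, FinPerm u → FinPerm v →
      {w : Equiv.Perm ℕ | c t y u v w ≠ 0}.Finite ∧
      (∀ w, ¬ FinPerm w → c t y u v w = 0) ∧
      G y u * G t v = ∑ᶠ w : Equiv.Perm ℕ, C (c t y u v w) * G t w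

/-! ### The lattice model / pipe puzzles -/

/-- A state of the `n × n` lattice model: labels in `{0, …, n}` on all horizontal
and vertical (half-)edges.  `sst.1 i j` is the `j`-th horizontal (half-)edge of row
`i` (`j = 0` being the left boundary and `j = n` the right boundary), and
`sst.2 i j` is the `i`-th vertical (half-)edge of column `j` (`i = 0` the top
boundary, `i = n` the bottom boundary). -/
abbrev GridState (n : ℕ) : Type :=
  (Fin n → Fin (n + 1) → Fin (n + 1)) × (Fin (n + 1) → Fin n → Fin (n + 1))

/-- The label on the north edge of the tile in row `i`, column `j`. -/
def labN {n : ℕ} (sst : GridState n) (i j : Fin n) : ℕ := (sst.2 i.castSucc j : ℕ)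
/-- The label on the east edge of the tile in row `i`, column `j`. -/
def labE {n : ℕ} (sst : GridState n) (i j : Fin n) : ℕ := (sst.1 i j.succ : ℕ)
/-- The label on the west edge of the tile in row `i`, column `j`. -/
def labW {n : ℕ} (sst : GridState n) (i j : Fin n) : ℕ := (sst.1 i j.castSucc : ℕ)
/-- The label on the south edge of the tile in row `i`, column `j`. -/
def labS {n : ℕ} (sst : GridState n) (i j : Fin n) : ℕ := (sst.2 i.succ j : ℕ)

/-- Boundary label `κ_u` on the right side (0-based row `i`, 1-based pipe labels). -/
def kappaLab (k : ℕ) (u : Equiv.Perm ℕ) (i : ℕ) : ℕ :=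
  if u⁻¹ i < k then u⁻¹ i + 1 else 0

/-- Boundary label `θ_v` on the top side (0-based column `j`, 1-based pipe labels). -/
def thetaLab (k : ℕ) (v : Equiv.Perm ℕ) (j : ℕ) : ℕ :=
  if k ≤ v⁻¹ j then v⁻¹ j + 1 else 0

/-- Boundary label `η_w` on the bottom side (0-based column `j`, 1-based pipe labels). -/
def etaLab (w : Equiv.Perm ℕ) (j : ℕ) : ℕ := w⁻¹ j + 1

/-- The boundary condition for pipe puzzles for `(u, v, w)`: left edges all `0`,
right edges `κ_u`, top edges `θ_v`, bottom edges `η_w`. -/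
def BoundaryCond (n k : ℕ) (u v w : Equiv.Perm ℕ) (sst : GridState n) : Prop :=
  (∀ i : Fin n, (sst.1 i 0 : ℕ) = 0) ∧
  (∀ i : Fin n, (sst.1 i (Fin.last n) : ℕ) = kappaLab k u (i : ℕ)) ∧
  (∀ j : Fin n, (sst.2 0 j : ℕ) = thetaLab k v (j : ℕ)) ∧
  (∀ j : Fin n, (sst.2 (Fin.last n) j : ℕ) = etaLab w (j : ℕ))

/-- The admissible local configurations (tiles) of a pipe puzzle, in terms of the
four edge labels `N, E, W, S` around a tile:  the empty tile, the vertical pipe,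
the horizontal pipe, the crossing (with the horizontal pipe carrying the smaller
label), the two elbows `⌟` and `⌐` (labels `≤ k` coming from the right side,
labels `> k` from the top side), and the bumping tiles (with the stated label
restrictions). -/
def LAdm (k N E W S : ℕ) : Prop :=
  (N = 0 ∧ E = 0 ∧ W = 0 ∧ S = 0) ∨
  (E = 0 ∧ W = 0 ∧ 0 < N ∧ N = S) ∨
  (N = 0 ∧ S = 0 ∧ 0 < E ∧ E = W) ∨
  (0 < E ∧ E = W ∧ E < N ∧ N = S) ∨
  (E = 0 ∧ S = 0 ∧ 0 < N ∧ N = W ∧ N ≤ k) ∨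
  (E = 0 ∧ S = 0 ∧ N = W ∧ k < N) ∨
  (N = 0 ∧ W = 0 ∧ 0 < E ∧ E = S ∧ E ≤ k) ∨
  (N = 0 ∧ W = 0 ∧ E = S ∧ k < E) ∨
  (0 < E ∧ E = S ∧ E < N ∧ N = W ∧ N ≤ k) ∨
  (k < E ∧ E = S ∧ E < N ∧ N = W) ∨
  (0 < N ∧ N = W ∧ N ≤ k ∧ E = S ∧ k < E)

/-- The admissible local configurations of a Schubert pipe puzzle (no bumping
tiles; crossings have the horizontal pipe carrying the smaller label). -/
def LAdm0 (N E W S : ℕ) : Prop :=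
  (N = 0 ∧ E = 0 ∧ W = 0 ∧ S = 0) ∨
  (E = 0 ∧ W = 0 ∧ 0 < N ∧ N = S) ∨
  (N = 0 ∧ S = 0 ∧ 0 < E ∧ E = W) ∨
  (0 < E ∧ E = W ∧ E < N ∧ N = S) ∨
  (E = 0 ∧ S = 0 ∧ 0 < N ∧ N = W) ∨
  (N = 0 ∧ W = 0 ∧ 0 < E ∧ E = S)

/-- The vertex weight `L(x; N, E, W, S)` of the lattice model (equivalently, the
weight of the corresponding pipe-puzzle tile), with spectral parameter `x`. -/
def Lwt {K : Type*} [Field K] (β : K) (k : ℕ) (x : K) (N E W S : ℕ) : K :=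
  if N = 0 ∧ E = 0 ∧ W = 0 ∧ S = 0 then x
  else if E = 0 ∧ W = 0 ∧ 0 < N ∧ N = S then 1
  else if N = 0 ∧ S = 0 ∧ 0 < E ∧ E = W then 1
  else if 0 < E ∧ E = W ∧ E < N ∧ N = S then 1
  else if E = 0 ∧ S = 0 ∧ 0 < N ∧ N = W ∧ N ≤ k then 1 + β * x
  else if E = 0 ∧ S = 0 ∧ N = W ∧ k < N then 1
  else if N = 0 ∧ W = 0 ∧ 0 < E ∧ E = S ∧ E ≤ k then 1
  else if N = 0 ∧ W = 0 ∧ E = S ∧ k < E then 1 + β * x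
  else if 0 < E ∧ E = S ∧ E < N ∧ N = W ∧ N ≤ k then β
  else if k < E ∧ E = S ∧ E < N ∧ N = W then β
  else if 0 < N ∧ N = W ∧ N ≤ k ∧ E = S ∧ k < E then β * (1 + β * x)
  else 0

/-- The set of pipe puzzles for `(u, v, w)` (with separated-descent parameter `k`),
encoded as admissible states of the lattice model. -/
def PP (n k : ℕ) (u v w : Equiv.Perm ℕ) : Set (GridState n) :=
  {sst | BoundaryCond n k u v w sst ∧
    ∀ i j : Fin n, LAdm k (labN sst i j) (labE sst i j) (labW sst i j) (labS sst i j)}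

/-- The set of Schubert pipe puzzles for `(u, v, w)`. -/
def PP0 (n k : ℕ) (u v w : Equiv.Perm ℕ) : Set (GridState n) :=
  {sst | BoundaryCond n k u v w sst ∧
    ∀ i j : Fin n, LAdm0 (labN sst i j) (labE sst i j) (labW sst i j) (labS sst i j)}

/-- The weight `wt(π)` of a pipe puzzle: the product over all tiles, the tile in
row `i` and column `j` having spectral parameter `t_j ⊖ y_i`. -/
def stateWt {K : Type*} [Field K] (β : K) (k : ℕ) (t y : ℕ → K) {n : ℕ}
    (sst : GridState n) : K :=
  ∏ i : Fin n, ∏ j : Fin n,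
    Lwt β k (ominus β (t (j : ℕ)) (y (i : ℕ)))
      (labN sst i j) (labE sst i j) (labW sst i j) (labS sst i j)

/-- The Schubert weight `wt₀(π)`: the product of `t_j - y_i` over the positions
`(i, j)` of the empty tiles. -/
def stateWt0 {K : Type*} [Field K] (t y : ℕ → K) {n : ℕ} (sst : GridState n) : K :=
  ∏ i : Fin n, ∏ j : Fin n,
    if labN sst i j = 0 ∧ labE sst i j = 0 ∧ labW sst i j = 0 ∧ labS sst i j = 0
    then t (j : ℕ) - y (i : ℕ) else 1


def invSet (w : Equiv.Perm ℕ) : Set (ℕ × ℕ) := {p | p.1 < p.2 ∧ w p.2 < w p.1}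

lemma len_eq_ncard_invSet (w : Equiv.Perm ℕ) : len w = (invSet w).ncard := rfl

lemma len_one : len 1 = 0 := by
  rw [len_eq_ncard_invSet, show invSet 1 = ∅ from
    Set.eq_empty_of_forall_notMem fun p hp => absurd hp.1 (not_lt.2 hp.2.le), Set.ncard_empty]

lemma revPerm_apply (N j : ℕ) : revPerm N j = if j < N then N - 1 - j else j := rfl

lemma sTr_apply (i j : ℕ) : sTr i j = if j = i then i + 1 else if j = i + 1 then i else j :=
  Equiv.swap_apply_def i (i + 1) j

lemma mul_sTr_mul_sTr (w : Equiv.Perm ℕ) (i : ℕ) : w * sTr i * sTr i = w := by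
  rw [mul_assoc, sTr, Equiv.swap_mul_self, mul_one]

lemma FinPerm.mul {u v : Equiv.Perm ℕ} (hu : FinPerm u) (hv : FinPerm v) : FinPerm (u * v) := by
  obtain ⟨M, hM⟩ := hu
  obtain ⟨N, hN⟩ := hv
  exact ⟨max M N, fun j hj => by
    rw [Equiv.Perm.mul_apply, hN j (le_of_max_le_right hj), hM j (le_of_max_le_left hj)]⟩

lemma FinPerm.inv {u : Equiv.Perm ℕ} (hu : FinPerm u) : FinPerm u⁻¹ := by
  obtain ⟨N, hN⟩ := hu
  exact ⟨N, fun j hj => by rw [Equiv.Perm.inv_eq_iff_eq, hN j hj]⟩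

section InSn

variable {N i : ℕ} {σ w : Equiv.Perm ℕ}

lemma inSn_one : InSn N 1 := fun _ _ => rfl

lemma inSn_revPerm (N : ℕ) : InSn N (revPerm N) := fun j hj => by
  rw [revPerm_apply, if_neg (by omega)]

lemma InSn.mul_sTr (h : InSn N w) (hi : i + 1 < N) : InSn N (w * sTr i) := fun j hj => by
  rw [Equiv.Perm.mul_apply, sTr_apply, if_neg (by omega), if_neg (by omega), h j hj]

lemma InSn.apply_lt (h : InSn N w) {j : ℕ} (hj : j < N) : w j < N := by
  by_contra! hge
  have := w.injective (h _ hge)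
  omega

lemma InSn.invSet_subset (h : InSn N w) : invSet w ⊆ Set.Iio N ×ˢ Set.Iio N := by
  rintro ⟨p, q⟩ ⟨hpq, hinv : w q < w p⟩
  have hq : q < N := by
    by_contra! hq
    rw [h q hq] at hinv
    by_cases hp : p < N
    · have := h.apply_lt hp
      omega
    · rw [h p (by omega)] at hinv
      omega
  exact ⟨Set.mem_Iio.2 (hpq.trans hq), Set.mem_Iio.2 hq⟩

lemma InSn.invSet_finite (h : InSn N w) : (invSet w).Finite :=
  ((Set.finite_Iio N).prod (Set.finite_Iio N)).subset h.invSet_subset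

lemma InSn.eq_of_forall_le {π : Equiv.Perm ℕ} (hσ : InSn N σ) (hπ : InSn N π)
    (hle : ∀ j < N, π j ≤ σ j) : σ = π := by
  have hsum : ∀ {ρ : Equiv.Perm ℕ}, InSn N ρ →
      ∑ j ∈ Finset.range N, ρ j = ∑ j ∈ Finset.range N, j := fun {ρ} hρ =>
    Equiv.Perm.sum_comp ρ _ id fun j hj =>
      Finset.mem_range.2 (by by_contra! hjN; exact hj (hρ j hjN))
  have heq := (Finset.sum_eq_sum_iff_of_le fun j hj => hle j (Finset.mem_range.1 hj)).1
    ((hsum hπ).trans (hsum hσ).symm)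
  ext j
  by_cases hj : j < N
  · exact (heq j (Finset.mem_range.2 hj)).symm
  · rw [hσ j (by omega), hπ j (by omega)]

lemma InSn.eq_revPerm_of_forall_le (h : InSn N σ) (hle : ∀ j < N, N - 1 - j ≤ σ j) :
    σ = revPerm N :=
  h.eq_of_forall_le (inSn_revPerm N) fun j hj => by
    rw [revPerm_apply, if_pos hj]
    exact hle j hj

lemma InSn.exists_lt_sub (h : InSn N σ) (hne : σ ≠ revPerm N) :
    ∃ j < N, σ j < N - 1 - j := by
  by_contra! hge
  exact hne (h.eq_revPerm_of_forall_le hge)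

lemma InSn.exists_ascent (h : InSn N w) (hne : w ≠ revPerm N) :
    ∃ i, i + 1 < N ∧ w i < w (i + 1) := by
  by_contra! hdes
  have hbound : ∀ d j, j + d + 1 = N → d ≤ w j := by
    intro d
    induction d with
    | zero => simp
    | succ d ih =>
      intro j hj
      have h1 := hdes j (by omega)
      have h2 := ih (j + 1) (by omega)
      have h3 : w (j + 1) ≠ w j := w.injective.ne (by omega)
      omega
  exact hne (h.eq_revPerm_of_forall_le fun j hj => hbound _ j (by omega))

lemma InSn.exists_descent (h : InSn N w) (hne : w ≠ 1) : ∃ i, w (i + 1) < w i := by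
  by_contra! hasc
  have hmono : StrictMono w := strictMono_nat_of_lt_succ fun i =>
    (hasc i).lt_of_ne (w.injective.ne (by omega))
  exact hne (h.eq_of_forall_le inSn_one fun j _ => hmono.id_le j)

lemma InSn.len_pos (h : InSn N w) (hne : w ≠ 1) : 0 < len w := by
  obtain ⟨i, hdes⟩ := h.exists_descent hne
  exact (Set.ncard_pos h.invSet_finite).2 ⟨(i, i + 1), Nat.lt_succ_self i, hdes⟩

lemma len_mul_sTr_of_lt (h : InSn N w) (hasc : w i < w (i + 1)) :
    len (w * sTr i) = len w + 1 := by
  have hss : ∀ j, (sTr i).symm j = sTr i j := fun j => by simp [sTr]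
  have hmem : ∀ p q, (p, q) ∈ Equiv.prodCongr (sTr i) (sTr i) '' invSet w ↔
      (sTr i p, sTr i q) ∈ invSet w := fun p q => by
    rw [Set.mem_image_equiv, Equiv.prodCongr_symm, Equiv.prodCongr_apply, Prod.map, hss, hss]
  have himage : invSet (w * sTr i) =
      insert (i, i + 1) (Equiv.prodCongr (sTr i) (sTr i) '' invSet w) := by
    ext ⟨p, q⟩
    rw [Set.mem_insert_iff, hmem, Prod.mk.injEq]
    simp only [invSet, Set.mem_ofPred_eq, Equiv.Perm.mul_apply, sTr_apply]
    split_ifs <;> omega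
  have hnot : (i, i + 1) ∉ Equiv.prodCongr (sTr i) (sTr i) '' invSet w := by
    rw [hmem, sTr_apply, sTr_apply]
    simp [invSet]
  rw [len_eq_ncard_invSet, len_eq_ncard_invSet, himage,
    Set.ncard_insert_of_notMem hnot (h.invSet_finite.image _),
    Set.ncard_image_of_injective _ (Equiv.injective _)]

lemma len_mul_sTr_le (h : InSn N σ) (hi : i + 1 < N) : len (σ * sTr i) ≤ len σ + 1 := by
  rcases lt_or_gt_of_ne (σ.injective.ne (show i ≠ i + 1 by omega)) with hasc | hdes
  · exact (len_mul_sTr_of_lt h hasc).le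
  · have hasc' : (σ * sTr i) i < (σ * sTr i) (i + 1) := by
      simpa [sTr_apply] using hdes
    have := len_mul_sTr_of_lt (h.mul_sTr hi) hasc'
    rw [mul_sTr_mul_sTr] at this
    omega

lemma InSn.len_lt_len_revPerm (h : InSn N w) (hne : w ≠ revPerm N) :
    len w < len (revPerm N) := by
  obtain ⟨i, hi, hasc⟩ := h.exists_ascent hne
  have hrev : ∀ p q, p < q → q < N → (p, q) ∈ invSet (revPerm N) := fun p q hpq hq => by
    simp only [invSet, Set.mem_ofPred_eq, revPerm_apply]
    split_ifs <;> omega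
  refine Set.ncard_lt_ncard (Set.ssubset_iff_exists.2 ⟨fun p hp => ?_, ?_⟩)
    (inSn_revPerm N).invSet_finite
  · exact hrev _ _ hp.1 (Set.mem_Iio.1 (h.invSet_subset hp).2)
  · exact ⟨(i, i + 1), hrev _ _ (Nat.lt_succ_self i) hi, fun hmem => by
      have : w (i + 1) < w i := hmem.2
      omega⟩

end InSn

section DividedDifference

open MvPolynomial

variable {R : Type*} [CommRing R]

lemma X_sub_X_dvd_sub_rename_swap (i : ℕ) (f : MvPolynomial ℕ R) :
    (X i - X (i + 1) : MvPolynomial ℕ R) ∣ f - rename (Equiv.swap i (i + 1)) f := by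
  induction f using MvPolynomial.induction_on with
  | C a => simp
  | add p q hp hq => simpa [add_sub_add_comm] using dvd_add hp hq
  | mul_X p n hp =>
    have hX : (X i - X (i + 1) : MvPolynomial ℕ R) ∣ X n - X (Equiv.swap i (i + 1) n) := by
      rw [Equiv.swap_apply_def]
      split_ifs with h1 h2
      · rw [h1]
      · rw [h2]
        exact ⟨-1, by ring⟩
      · simp
    have hsplit : p * X n - rename (Equiv.swap i (i + 1)) (p * X n) =
        (p - rename (Equiv.swap i (i + 1)) p) * X n +
          rename (Equiv.swap i (i + 1)) p * (X n - X (Equiv.swap i (i + 1) n)) := by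
      rw [map_mul, rename_X]
      ring
    rw [hsplit]
    exact dvd_add (dvd_mul_of_dvd_left hp _) (dvd_mul_of_dvd_right hX _)

/-- The divided difference `∂_i`; over a ring that is not a domain it is only a choice of
quotient. -/
def ddiff (i : ℕ) (f : MvPolynomial ℕ R) : MvPolynomial ℕ R :=
  (X_sub_X_dvd_sub_rename_swap i f).choose

lemma X_sub_X_mul_ddiff (i : ℕ) (f : MvPolynomial ℕ R) :
    (X i - X (i + 1)) * ddiff i f = f - rename (Equiv.swap i (i + 1)) f :=
  (X_sub_X_dvd_sub_rename_swap i f).choose_spec.symm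

lemma X_sub_X_succ_ne_zero [Nontrivial R] (i : ℕ) :
    (X i - X (i + 1) : MvPolynomial ℕ R) ≠ 0 :=
  sub_ne_zero.2 (X_injective.ne (by omega))

end DividedDifference

section GenericSchubert

open MvPolynomial

variable {R : Type*} [CommRing R] {N : ℕ}

def topSchubert (τ : ℕ → R) (N : ℕ) : MvPolynomial ℕ R :=
  ∏ i ∈ Finset.range N, ∏ j ∈ Finset.range (N - 1 - i), (X i - C (τ j))

open Classical in
/-- The double Schubert polynomials of `S_N` in the variables `x` and coefficients `τ`, obtained
from `topSchubert` by divided differences along a chosen ascent (junk outside `S_N`). -/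
def doubleSchubert (τ : ℕ → R) (N : ℕ) (w : Equiv.Perm ℕ) : MvPolynomial ℕ R :=
  if h : InSn N w ∧ w ≠ revPerm N then
    ddiff (h.1.exists_ascent h.2).choose
      (doubleSchubert τ N (w * sTr (h.1.exists_ascent h.2).choose))
  else topSchubert τ N
termination_by len (revPerm N) - len w
decreasing_by
  have := len_mul_sTr_of_lt h.1 (h.1.exists_ascent h.2).choose_spec.2
  have := h.1.len_lt_len_revPerm h.2
  omega

lemma doubleSchubert_revPerm (τ : ℕ → R) (N : ℕ) :
    doubleSchubert τ N (revPerm N) = topSchubert τ N := by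
  rw [doubleSchubert, dif_neg (fun h => h.2 rfl)]

lemma doubleSchubert_eq_ddiff (τ : ℕ → R) {w : Equiv.Perm ℕ} (hw : InSn N w)
    (hne : w ≠ revPerm N) :
    ∃ i, i + 1 < N ∧ w i < w (i + 1) ∧
      doubleSchubert τ N w = ddiff i (doubleSchubert τ N (w * sTr i)) :=
  ⟨_, (hw.exists_ascent hne).choose_spec.1, (hw.exists_ascent hne).choose_spec.2,
    by rw [doubleSchubert, dif_pos ⟨hw, hne⟩]⟩

@[elab_as_elim]
theorem doubleSchubert_induction (τ : ℕ → R) (N : ℕ) {P : Equiv.Perm ℕ → Prop}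
    (top : P (revPerm N))
    (step : ∀ w i, InSn N w → i + 1 < N → w i < w (i + 1) →
      doubleSchubert τ N w = ddiff i (doubleSchubert τ N (w * sTr i)) → P (w * sTr i) → P w)
    (w : Equiv.Perm ℕ) (hw : InSn N w) : P w := by
  by_cases hne : w = revPerm N
  · exact hne ▸ top
  obtain ⟨i, hi, hasc, hQ⟩ := doubleSchubert_eq_ddiff τ hw hne
  have := len_mul_sTr_of_lt hw hasc
  have := hw.len_lt_len_revPerm hne
  exact step w i hw hi hasc hQ (doubleSchubert_induction τ N top step _ (hw.mul_sTr hi))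
termination_by len (revPerm N) - len w

lemma eval_topSchubert_eq_zero (τ : ℕ → R) {σ : Equiv.Perm ℕ} (hσ : InSn N σ)
    (hne : σ ≠ revPerm N) : eval (τ ∘ σ) (topSchubert τ N) = 0 := by
  obtain ⟨i, hi, hlow⟩ := hσ.exists_lt_sub hne
  rw [topSchubert, map_prod]
  refine Finset.prod_eq_zero (Finset.mem_range.2 hi) ?_
  rw [map_prod]
  refine Finset.prod_eq_zero (Finset.mem_range.2 hlow) ?_
  simp

theorem eval_doubleSchubert_eq_zero [IsDomain R] {τ : ℕ → R} (hτ : Function.Injective τ)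
    {w σ : Equiv.Perm ℕ} (hw : InSn N w) (hσ : InSn N σ) (hlt : len σ < len w) :
    eval (τ ∘ σ) (doubleSchubert τ N w) = 0 := by
  refine doubleSchubert_induction τ N (P := fun w => ∀ σ : Equiv.Perm ℕ, InSn N σ →
    len σ < len w → eval (τ ∘ σ) (doubleSchubert τ N w) = 0) ?_ ?_ w hw σ hσ hlt
  · intro σ hσ hlt
    rw [doubleSchubert_revPerm]
    exact eval_topSchubert_eq_zero τ hσ (by rintro rfl; exact hlt.false)
  · intro w i hw hi hasc hQ ih σ hσ hlt
    have hlen := len_mul_sTr_of_lt hw hasc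
    have hev := congrArg (eval (τ ∘ σ))
      (X_sub_X_mul_ddiff i (doubleSchubert τ N (w * sTr i)))
    rw [← hQ, map_mul, map_sub, map_sub, eval_X, eval_X, eval_rename, ih σ hσ (by omega),
      show (τ ∘ σ) ∘ Equiv.swap i (i + 1) = τ ∘ (σ * sTr i) from rfl,
      ih _ (hσ.mul_sTr hi) (by have := len_mul_sTr_le hσ hi; omega), sub_zero] at hev
    exact (mul_eq_zero.1 hev).resolve_left
      (sub_ne_zero.2 (hτ.ne (σ.injective.ne (by omega))))

end GenericSchubert

section SchubertFamily

open MvPolynomial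

variable {K : Type*} [Field K] {S : (ℕ → K) → Equiv.Perm ℕ → MvPolynomial ℕ K}

lemma GrothFamily.apply_revPerm (hS : GrothFamily (0 : K) S) (t : ℕ → K) (N : ℕ) :
    S t (revPerm N) = topSchubert t N := by
  simpa [topSchubert] using (hS t (by simp)).1 N

lemma GrothFamily.apply_one (hS : GrothFamily (0 : K) S) (t : ℕ → K) : S t 1 = 1 := by
  have hrev : revPerm 0 = 1 := Equiv.ext fun j => by simp [revPerm_apply]
  simpa [hrev, topSchubert] using hS.apply_revPerm t 0

lemma GrothFamily.X_sub_X_mul_apply (hS : GrothFamily (0 : K) S) (t : ℕ → K)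
    {w : Equiv.Perm ℕ} {i : ℕ} (hasc : w i < w (i + 1)) :
    (X i - X (i + 1)) * S t w =
      S t (w * sTr i) - rename (Equiv.swap i (i + 1)) (S t (w * sTr i)) := by
  have hdes : (w * sTr i) (i + 1) < (w * sTr i) i := by simpa [sTr_apply] using hasc
  simpa [mul_sTr_mul_sTr] using (hS t (by simp)).2 (w * sTr i) i hdes

lemma GrothFamily.map_eval_doubleSchubert (hS : GrothFamily (0 : K) S) (t : ℕ → K) {N : ℕ}
    {w : Equiv.Perm ℕ} (hw : InSn N w) :
    map (eval t) (doubleSchubert (X : ℕ → MvPolynomial ℕ K) N w) = S t w := by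
  refine doubleSchubert_induction (X : ℕ → MvPolynomial ℕ K) N ?_ ?_ w hw
  · simp [doubleSchubert_revPerm, hS.apply_revPerm, topSchubert, map_prod]
  · intro w i _ _ hasc hQ ih
    refine mul_left_cancel₀ (X_sub_X_succ_ne_zero i) ?_
    have hmap := congrArg (map (eval t))
      (X_sub_X_mul_ddiff i (doubleSchubert X N (w * sTr i)))
    rw [map_mul, map_sub, map_sub, map_X, map_X, map_rename, ih] at hmap
    rw [hS.X_sub_X_mul_apply t hasc, hQ, hmap]

open Classical in
theorem GrothFamily.eval_apply_self (hS : GrothFamily (0 : K) S) (t : ℕ → K)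
    {z : Equiv.Perm ℕ} (hz : FinPerm z) : eval t (S t z) = if z = 1 then 1 else 0 := by
  split_ifs with h1
  · rw [h1, hS.apply_one, map_one]
  obtain ⟨N, hN⟩ := hz
  have hzN : InSn N z := hN
  have hloc := eval_doubleSchubert_eq_zero (X_injective (R := K)) hzN inSn_one
    (by rw [len_one]; exact hzN.len_pos h1)
  rw [Equiv.Perm.coe_one, Function.comp_id] at hloc
  calc eval t (S t z) = eval t (map (eval t) (doubleSchubert X N z)) := by
        rw [hS.map_eval_doubleSchubert t hzN]
    _ = eval t (eval X (doubleSchubert X N z)) := by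
        rw [eval_map, eval₂_comp]
        congr
        funext j
        simp
    _ = 0 := by rw [hloc, map_zero]

open Classical in
lemma GrothFamily.eval_D_apply (hS : GrothFamily (0 : K) S)
    {D : Equiv.Perm ℕ → MvPolynomial ℕ K →ₗ[K] MvPolynomial ℕ K}
    (hD : ∀ (t : ℕ → K) (u w : Equiv.Perm ℕ), FinPerm u → FinPerm w →
      D w (S t u) = if len (u * w⁻¹) + len w = len u then S t (u * w⁻¹) else 0)
    (t : ℕ → K) {z w : Equiv.Perm ℕ} (hz : FinPerm z) (hw : FinPerm w) :
    eval t (D w (S t z)) = if z = w then 1 else 0 := by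
  rw [hD t z w hz hw, apply_ite (eval t), hS.eval_apply_self t (hz.mul hw.inv), map_zero]
  by_cases hzw : z = w
  · simp [hzw, len_one]
  · simp [hzw, mul_inv_eq_one]

end SchubertFamily

section Pairing

open MvPolynomial

variable {K : Type*} [Field K]

open Classical in
lemma eval_D_mul_eq_eval_Dskew
    {D : Equiv.Perm ℕ → MvPolynomial ℕ K →ₗ[K] MvPolynomial ℕ K}
    {Dskew : Equiv.Perm ℕ → Equiv.Perm ℕ → MvPolynomial ℕ K →ₗ[K] MvPolynomial ℕ K}
    (hskewsupp : ∀ w v, ¬ FinPerm v → Dskew w v = 0)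
    (hskewfin : ∀ (w : Equiv.Perm ℕ) (f : MvPolynomial ℕ K),
      {v : Equiv.Perm ℕ | Dskew w v f ≠ 0}.Finite)
    (hLeib : ∀ (w : Equiv.Perm ℕ), FinPerm w → ∀ f g : MvPolynomial ℕ K,
      D w (f * g) = ∑ᶠ v : Equiv.Perm ℕ, Dskew w v f * D v g)
    {v w : Equiv.Perm ℕ} (hv : FinPerm v) (hw : FinPerm w) (t : ℕ → K)
    (f g : MvPolynomial ℕ K)
    (hg : ∀ v', FinPerm v' → eval t (D v' g) = if v = v' then 1 else 0) :
    eval t (D w (f * g)) = eval t (Dskew w v f) := by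
  have hfin : (Function.support fun v' => Dskew w v' f * D v' g).Finite :=
    (hskewfin w f).subset fun v' hv' hzero => hv' (by simp [hzero])
  rw [hLeib w hw, map_finsum _ hfin, finsum_eq_single _ v, map_mul, hg v hv, if_pos rfl, mul_one]
  intro v' hne
  by_cases hv' : FinPerm v'
  · rw [map_mul, hg v' hv', if_neg (Ne.symm hne), mul_zero]
  · rw [hskewsupp w v' hv', LinearMap.zero_apply, zero_mul, map_zero]

open Classical in
lemma eval_finsum_C_mul_eq (L : MvPolynomial ℕ K →ₗ[K] MvPolynomial ℕ K) (t : ℕ → K)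
    (g : Equiv.Perm ℕ → MvPolynomial ℕ K) {c : Equiv.Perm ℕ → K} {w : Equiv.Perm ℕ}
    (hw : FinPerm w)
    (hcfin : {w' | c w' ≠ 0}.Finite) (hcsupp : ∀ w', ¬ FinPerm w' → c w' = 0)
    (hg : ∀ w', FinPerm w' → eval t (L (g w')) = if w' = w then 1 else 0) :
    eval t (L (∑ᶠ w', C (c w') * g w')) = c w := by
  have hsmul : ∀ w', eval t (L (C (c w') * g w')) = c w' * eval t (L (g w')) := fun w' => by
    rw [← smul_eq_C_mul, map_smul, smul_eval]
  have hfin : (Function.support fun w' => C (c w') * g w').Finite :=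
    hcfin.subset fun w' hw' hzero => hw' (by simp [hzero])
  have hfinL : (Function.support fun w' => L (C (c w') * g w')).Finite :=
    hfin.subset (Function.support_comp_subset (map_zero L) _)
  rw [map_finsum L hfin, map_finsum (eval t) hfinL,
    finsum_eq_single _ w, hsmul, hg w hw, if_pos rfl, mul_one]
  intro w' hne
  rw [hsmul]
  by_cases hw' : FinPerm w'
  · rw [hg w' hw', if_neg hne, mul_zero]
  · rw [hcsupp w' hw', zero_mul]

end Pairing

/-- Proposition `Coro:SxxSxt` of the paper.  For all
`u, v, w ∈ S_∞`, the skew divided difference operator applied to a single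
Schubert polynomial satisfies `∂_{w/v} 𝔖_u(x) = c̄_{u,v}^w(x, 0)`, i.e. it equals
the double Schubert structure constant `c̄_{u,v}^w(t,y)` with each `t_i`
replaced by `x_i` and each `y_i` by `0` (expressed by evaluating both sides of
the polynomial identity at an arbitrary valuation `t` of the `x`-variables).

Here `S` is the family of double Schubert polynomials (`β = 0` Grothendieck
polynomials), `cbar` the associated structure constants, `D w` the divided
difference operator `∂_w` (characterized by its action on double Schubert
polynomials), and `Dskew w v` the skew operator `∂_{w/v}`, characterized by the
Leibniz-type expansion `∂_w(fg) = Σ_v (∂_{w/v} f)·(∂_v g)`. -/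
theorem skew_divided_difference_eq_structure_constant
    {K : Type*} [Field K]
    (S : (ℕ → K) → Equiv.Perm ℕ → MvPolynomial ℕ K)
    (cbar : (ℕ → K) → (ℕ → K) → Equiv.Perm ℕ → Equiv.Perm ℕ → Equiv.Perm ℕ → K)
    (hS : GrothFamily (0 : K) S) (hc : StructConsts (0 : K) S cbar)
    (D : Equiv.Perm ℕ → MvPolynomial ℕ K →ₗ[K] MvPolynomial ℕ K)
    (hD : ∀ (t : ℕ → K) (u w : Equiv.Perm ℕ), FinPerm u → FinPerm w →
      D w (S t u) = if len (u * w⁻¹) + len w = len u then S t (u * w⁻¹) else 0)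
    (Dskew : Equiv.Perm ℕ → Equiv.Perm ℕ → MvPolynomial ℕ K →ₗ[K] MvPolynomial ℕ K)
    (hskewsupp : ∀ w v, ¬ FinPerm v → Dskew w v = 0)
    (hskewfin : ∀ (w : Equiv.Perm ℕ) (f : MvPolynomial ℕ K),
      {v : Equiv.Perm ℕ | Dskew w v f ≠ 0}.Finite)
    (hLeib : ∀ (w : Equiv.Perm ℕ), FinPerm w → ∀ f g : MvPolynomial ℕ K,
      D w (f * g) = ∑ᶠ v : Equiv.Perm ℕ, Dskew w v f * D v g)
    (u v w : Equiv.Perm ℕ) (hu : FinPerm u) (hv : FinPerm v) (hw : FinPerm w) :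
    ∀ t : ℕ → K,
      MvPolynomial.eval t (Dskew w v (S (fun _ => 0) u)) =
        cbar t (fun _ => 0) u v w := by
  intro t
  obtain ⟨hfin, hsupp, hexp⟩ := hc t (fun _ => 0) (by simp) (by simp) u v hu hv
  calc MvPolynomial.eval t (Dskew w v (S (fun _ => 0) u))
      = MvPolynomial.eval t (D w (S (fun _ => 0) u * S t v)) :=
        (eval_D_mul_eq_eval_Dskew hskewsupp hskewfin hLeib hv hw t _ _
          fun v' hv' => hS.eval_D_apply hD t hv hv').symm
    _ = cbar t (fun _ => 0) u v w := by
        rw [hexp]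
        exact eval_finsum_C_mul_eq (D w) t (S t) hw hfin hsupp
          fun w' hw' => hS.eval_D_apply hD t hw' hw
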